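/- Let 0 < p < 1. Define f = ∑_{i=0}^∞ 2^{−2i(1/p−1)} · 2^{2i(1/p−1)} (D_{2^{2i+1}} − D_{2^{2i}}) (i.e. the martingale with f̂(j) = 1 for j ∈ [2^{2i}, 2^{2i+1}) for all i, f̂(j) = 0 otherwise). Then f ∈ H_p(G), ω(1/2^{2n}, f)_{H_p} = O(2^{−2n(1/p−1)}) as n → ∞, and yet ‖S_{2^{2k+1}−1} f − f‖_{L^{p,∞}} does not tend to 0 as k → ∞; in fact limsup_k ‖f − S_{2^{2k+1}−1} f‖_{L^{p,∞}} > 0. -/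

import Mathlib

/-!
The block `D_{2^(l+1)} - D_{2^l} = 2^l (2·1_{I_(l+1)} - 1_{I_l})` is supported on `I_l`. Hence a
martingale whose Walsh coefficients are bounded by one, constant on each dyadic block
`[2^l, 2^(l+1))` and zero below level `L` has maximal function `0` off `I_L`, and on the shell
`I_N \ I_(N+1)` its dyadic partial sums stop changing after `2^(N+1)` terms of modulus at most one,
so its maximal function is at most `2^(N+1)` there. The shells have measure `2^(-N)`, so
`‖f‖_{H_p}^p ≲ ∑_{N ≥ L} 2^((N+1)p - N)`, a geometric series of size `2^(L(p-1))` when `p < 1`.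

Off `I_(2k+2)`, a set of measure at least `1/2`, the series of `f` terminates at `S_{2^(2k+1)} f`,
so `f - S_{2^(2k+1)-1} f` is the single Walsh function `w_{2^(2k+1)-1}` of modulus one there, and
its weak `L^p` quasi-norm stays above `2^(-1-1/p)`.
-/

open MeasureTheory ENNReal Filter
open scoped Classical

noncomputable section

instance : TopologicalSpace (ZMod 2) := ⊥
instance : DiscreteTopology (ZMod 2) := ⟨rfl⟩
instance : MeasurableSpace (ZMod 2) := ⊤
instance : BorelSpace (ZMod 2) := ⟨borel_eq_top_of_discrete.symm⟩
instance : IsTopologicalAddGroup (ZMod 2) where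
  continuous_add := continuous_of_discreteTopology
  continuous_neg := continuous_of_discreteTopology

/-- The dyadic group `G = (ℤ/2)^ℕ`. -/
abbrev G2 : Type := ℕ → ZMod 2

/-- Normalized Haar (probability) measure on `G2`. -/
def muG : Measure G2 :=
  Measure.addHaarMeasure ⟨⟨Set.univ, isCompact_univ⟩, by
    rw [interior_univ]; exact Set.univ_nonempty⟩

/-- Rademacher functions. -/
def rad (k : ℕ) (x : G2) : ℝ := (-1 : ℝ) ^ ((x k).val)

/-- Walsh–Paley functions. -/
def walsh (n : ℕ) (x : G2) : ℝ :=
  ∏ k ∈ Finset.range n, if n.testBit k then rad k x else 1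

/-- Walsh–Dirichlet kernels. -/
def dirichlet (n : ℕ) (x : G2) : ℝ := ∑ k ∈ Finset.range n, walsh k x

/-- The cylinder sets `I_n`. -/
def cyl (n : ℕ) : Set G2 := {x | ∀ i < n, x i = 0}

/-- Walsh–Fourier coefficients. -/
def fhat (f : G2 → ℝ) (k : ℕ) : ℝ := ∫ x, f x * walsh k x ∂muG

/-- Walsh–Fourier partial sums of a function. -/
def funS (f : G2 → ℝ) (n : ℕ) (x : G2) : ℝ :=
  ∑ k ∈ Finset.range n, fhat f k * walsh k x

/-- Partial sums of the Walsh series of a dyadic martingale given by coefficients `c`. -/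
def mS (c : ℕ → ℝ) (n : ℕ) (x : G2) : ℝ := ∑ k ∈ Finset.range n, c k * walsh k x

/-- The martingale maximal function. -/
def mMax (c : ℕ → ℝ) (x : G2) : ℝ≥0∞ := ⨆ n : ℕ, (‖mS c (2 ^ n) x‖₊ : ℝ≥0∞)

/-- The martingale Hardy space quasi-norm `H_p`. -/
def mHp (p : ℝ) (c : ℕ → ℝ) : ℝ≥0∞ := (∫⁻ x, (mMax c x) ^ p ∂muG) ^ (1 / p)

/-- The maximal function of an integrable function. -/
def funMax (f : G2 → ℝ) (x : G2) : ℝ≥0∞ := ⨆ n : ℕ, (‖funS f (2 ^ n) x‖₊ : ℝ≥0∞)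

/-- The Hardy space quasi-norm of an integrable function. -/
def funHp (p : ℝ) (f : G2 → ℝ) : ℝ≥0∞ := (∫⁻ x, (funMax f x) ^ p ∂muG) ^ (1 / p)

/-- Weak `L^p` quasi-norm. -/
def weakLp (p : ℝ) (f : G2 → ℝ) : ℝ≥0∞ :=
  ⨆ t : NNReal, (t : ℝ≥0∞) * (muG {x | (t : ℝ) < |f x|}) ^ (1 / p)


/-- Coefficients of the counterexample martingale: `̂f(j) = 1` on the blocks
`[2^{2i}, 2^{2i+1})`. -/
def cc16 : ℕ → ℝ := fun j => if ∃ i : ℕ, 2 ^ (2 * i) ≤ j ∧ j < 2 ^ (2 * i + 1) then 1 else 0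

/-- The a.e.-defined limit function of the counterexample martingale. -/
def F16 (x : G2) : ℝ := ∑' i : ℕ, (dirichlet (2 ^ (2 * i + 1)) x - dirichlet (2 ^ (2 * i)) x)

instance : IsProbabilityMeasure muG := ⟨Measure.addHaarMeasure_self⟩

instance : muG.IsAddLeftInvariant := by
  unfold muG; infer_instance

lemma measurableSet_cyl (n : ℕ) : MeasurableSet (cyl n) := by
  have : cyl n = ⋂ i ∈ Finset.range n, (fun x : G2 => x i) ⁻¹' {0} := by
    ext x; simp [cyl]
  rw [this]
  exact Finset.measurableSet_biInter _ fun i _ => measurable_pi_apply i (.singleton 0)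

lemma cyl_antitone : Antitone cyl :=
  fun _ _ h _ hx i hi => hx i (lt_of_lt_of_le hi h)

lemma cyl_zero : cyl 0 = Set.univ := by
  ext x; simp [cyl]

lemma mem_cyl_succ {n : ℕ} {x : G2} : x ∈ cyl (n + 1) ↔ x ∈ cyl n ∧ x n = 0 := by
  simp only [cyl, Set.mem_ofPred_eq, Nat.lt_succ_iff_lt_or_eq, or_imp, forall_and, forall_eq]

lemma zmod_two_eq_zero_or_eq_one (a : ZMod 2) : a = 0 ∨ a = 1 := by
  revert a; decide

lemma cyl_eq_union (n : ℕ) :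
    cyl n = cyl (n + 1) ∪ (Pi.single n 1 + ·) ⁻¹' cyl (n + 1) := by
  ext x
  have hshift : ∀ i < n, (Pi.single n 1 + x : G2) i = x i := fun i hi => by
    simp [hi.ne]
  simp only [Set.mem_union, Set.mem_preimage, mem_cyl_succ]
  constructor
  · intro hx
    rcases zmod_two_eq_zero_or_eq_one (x n) with h | h
    · exact .inl ⟨hx, h⟩
    · refine .inr ⟨fun i hi => (hshift i hi).trans (hx i hi), ?_⟩
      simp [h]; decide
  · rintro (⟨hx, -⟩ | ⟨hx, -⟩)
    · exact hx
    · exact fun i hi => (hshift i hi).symm.trans (hx i hi)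

lemma disjoint_cyl_succ (n : ℕ) :
    Disjoint (cyl (n + 1)) ((Pi.single n 1 + ·) ⁻¹' cyl (n + 1)) := by
  refine Set.disjoint_left.2 fun x hx hx' => ?_
  have h1 := (mem_cyl_succ.1 hx).2
  have h2 := (mem_cyl_succ.1 hx').2
  simp [h1] at h2

lemma muG_cyl (n : ℕ) : muG (cyl n) = (2 ^ n)⁻¹ := by
  refine ENNReal.eq_inv_of_mul_eq_one_left ?_
  induction n with
  | zero => simp [cyl_zero]
  | succ n ih =>
    have hsplit : muG (cyl n) = 2 * muG (cyl (n + 1)) := by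
      rw [cyl_eq_union n, measure_union (disjoint_cyl_succ n)
        (measurable_const_add _ (measurableSet_cyl _)), measure_preimage_add, two_mul]
    rw [pow_succ, ← mul_assoc, mul_comm _ 2, ← mul_assoc, ← hsplit, ih]

lemma muG_singleton_zero : muG {0} = 0 := by
  refine le_antisymm (ge_of_tendsto' (ENNReal.tendsto_pow_atTop_nhds_zero_of_lt_one
    (ENNReal.inv_lt_one.2 one_lt_two)) fun n => ?_) bot_le
  rw [← ENNReal.inv_pow, ← muG_cyl]
  exact measure_mono fun x hx i _ => by simp [Set.mem_singleton_iff.1 hx]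

lemma exists_mem_cyl_add_not_mem_cyl_add_succ {L : ℕ} {x : G2} (hx0 : x ≠ 0)
    (hxL : x ∈ cyl L) :
    ∃ j, x ∈ cyl (L + j) ∧ x ∉ cyl (L + j + 1) := by
  obtain ⟨i, hi⟩ := Function.ne_iff.1 hx0
  have hex : ∃ j, x ∉ cyl (L + j + 1) := ⟨i, fun h => hi (h i (by omega))⟩
  refine ⟨Nat.find hex, ?_, Nat.find_spec hex⟩
  cases hj : Nat.find hex with
  | zero => simpa using hxL
  | succ j => simpa [← add_assoc] using Nat.find_min hex (hj ▸ j.lt_succ_self)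

/-- The shells `cyl N \ cyl (N + 1)` cover `G2` up to the null set `{0}`. -/
lemma lintegral_le_tsum_of_le_on_shells {g : G2 → ℝ≥0∞} {L : ℕ} {a : ℕ → ℝ≥0∞}
    (hg0 : ∀ x ∉ cyl L, g x = 0)
    (hg : ∀ j, ∀ x ∈ cyl (L + j), x ∉ cyl (L + j + 1) → g x ≤ a j) :
    ∫⁻ x, g x ∂muG ≤ ∑' j, a j * (2 ^ (L + j))⁻¹ := by
  set shell : ℕ → Set G2 := fun j => cyl (L + j) \ cyl (L + j + 1)
  have hshell : ∀ j, MeasurableSet (shell j) :=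
    fun j => (measurableSet_cyl _).diff (measurableSet_cyl _)
  have hae : ∀ᵐ x ∂muG, g x ≤ ∑' j, (shell j).indicator (fun _ => a j) x := by
    filter_upwards [measure_eq_zero_iff_ae_notMem.1 muG_singleton_zero] with x hx0
    by_cases hxL : x ∈ cyl L
    · obtain ⟨j, hj, hj'⟩ := exists_mem_cyl_add_not_mem_cyl_add_succ hx0 hxL
      calc g x ≤ (shell j).indicator (fun _ => a j) x := by
            rw [Set.indicator_of_mem (show x ∈ shell j from ⟨hj, hj'⟩)]; exact hg j x hj hj'
        _ ≤ _ := ENNReal.le_tsum j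
    · simp [hg0 x hxL]
  calc ∫⁻ x, g x ∂muG ≤ ∫⁻ x, ∑' j, (shell j).indicator (fun _ => a j) x ∂muG :=
        lintegral_mono_ae hae
    _ = ∑' j, a j * muG (shell j) := by
        rw [lintegral_tsum fun j => (measurable_const.indicator (hshell j)).aemeasurable]
        simp_rw [lintegral_indicator_const (hshell _)]
    _ ≤ ∑' j, a j * (2 ^ (L + j))⁻¹ := by
        gcongr with j
        exact (measure_mono Set.sdiff_subset).trans_eq (muG_cyl _)

lemma abs_rad (k : ℕ) (x : G2) : |rad k x| = 1 := abs_neg_one_pow _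

lemma one_add_rad (k : ℕ) (x : G2) : 1 + rad k x = if x k = 0 then 2 else 0 := by
  rcases zmod_two_eq_zero_or_eq_one (x k) with h | h <;> norm_num [rad, h, ZMod.val_one]

lemma abs_walsh (n : ℕ) (x : G2) : |walsh n x| = 1 := by
  rw [walsh, Finset.abs_prod]
  exact Finset.prod_eq_one fun k _ => by split_ifs <;> simp [abs_rad]

lemma walsh_eq_prod_range {n N : ℕ} (h : n < 2 ^ N) (x : G2) :
    walsh n x = ∏ k ∈ Finset.range N, if n.testBit k then rad k x else 1 := by
  have key : ∀ M, M ≤ max n N → n < 2 ^ M →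
      ∏ k ∈ Finset.range M, (if n.testBit k then rad k x else 1) =
        ∏ k ∈ Finset.range (max n N), if n.testBit k then rad k x else 1 := by
    intro M hM hnM
    refine Finset.prod_subset (Finset.range_subset_range.2 hM) fun k _ hk => ?_
    have : n < 2 ^ k := hnM.trans_le (Nat.pow_le_pow_right two_pos (by simpa using hk))
    simp [Nat.testBit_lt_two_pow this]
  rw [walsh, key n (le_max_left _ _) Nat.lt_two_pow_self, key N (le_max_right _ _) h]

lemma walsh_two_pow_add {n k : ℕ} (hk : k < 2 ^ n) (x : G2) :
    walsh (2 ^ n + k) x = rad n x * walsh k x := by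
  have hk' : k < 2 ^ (n + 1) := hk.trans (Nat.pow_lt_pow_right one_lt_two n.lt_succ_self)
  have hnk : 2 ^ n + k < 2 ^ (n + 1) := by rw [pow_succ]; omega
  rw [walsh_eq_prod_range hnk, walsh_eq_prod_range hk', Finset.prod_range_succ,
    Finset.prod_range_succ, Nat.testBit_two_pow_add_eq, Nat.testBit_lt_two_pow hk]
  simp only [Bool.not_false, if_true, Bool.false_eq_true, if_false, mul_one]
  rw [mul_comm]
  congr 1
  exact Finset.prod_congr rfl fun i hi => by
    rw [Nat.testBit_two_pow_add_gt (Finset.mem_range.1 hi)]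

lemma dirichlet_add (m k : ℕ) (x : G2) :
    dirichlet (m + k) x = dirichlet m x + ∑ i ∈ Finset.range k, walsh (m + i) x :=
  Finset.sum_range_add _ _ _

lemma dirichlet_two_pow (n : ℕ) (x : G2) :
    dirichlet (2 ^ n) x = if x ∈ cyl n then 2 ^ n else 0 := by
  induction n with
  | zero => simp [dirichlet, walsh, cyl_zero]
  | succ n ih =>
    have hrec : dirichlet (2 ^ (n + 1)) x = dirichlet (2 ^ n) x * (1 + rad n x) := by
      rw [pow_succ, mul_two, dirichlet_add, mul_add, mul_one, dirichlet,
        Finset.sum_mul]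
      congr 1
      exact Finset.sum_congr rfl fun i hi => by
        rw [walsh_two_pow_add (Finset.mem_range.1 hi), mul_comm]
    rw [hrec, ih, one_add_rad, mem_cyl_succ]
    by_cases hx : x ∈ cyl n <;> by_cases hxn : x n = 0 <;> simp [hx, hxn, pow_succ]

lemma dirichlet_two_pow_of_not_mem {n : ℕ} {x : G2} (hx : x ∉ cyl n) :
    dirichlet (2 ^ n) x = 0 := by
  rw [dirichlet_two_pow, if_neg hx]

lemma dirichlet_two_pow_succ_sub_of_not_mem {l : ℕ} {x : G2} (hx : x ∉ cyl l) :
    dirichlet (2 ^ (l + 1)) x - dirichlet (2 ^ l) x = 0 := by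
  rw [dirichlet_two_pow_of_not_mem hx,
    dirichlet_two_pow_of_not_mem fun h => hx (cyl_antitone l.le_succ h), sub_self]

def dyadicBlockCoeff (b : ℕ → ℝ) (j : ℕ) : ℝ := if j = 0 then 0 else b (Nat.log 2 j)

lemma dyadicBlockCoeff_eq {b : ℕ → ℝ} {l j : ℕ} (h1 : 2 ^ l ≤ j) (h2 : j < 2 ^ (l + 1)) :
    dyadicBlockCoeff b j = b l := by
  have hj : j ≠ 0 := (Nat.pos_of_ne_zero (pow_ne_zero l two_ne_zero)).trans_le h1 |>.ne'
  rw [dyadicBlockCoeff, if_neg hj, (Nat.log_eq_iff (.inr ⟨one_lt_two, hj⟩)).2 ⟨h1, h2⟩]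

lemma mS_dyadicBlockCoeff_two_pow (b : ℕ → ℝ) (m : ℕ) (x : G2) :
    mS (dyadicBlockCoeff b) (2 ^ m) x =
      ∑ l ∈ Finset.range m, b l * (dirichlet (2 ^ (l + 1)) x - dirichlet (2 ^ l) x) := by
  induction m with
  | zero => simp [mS, dyadicBlockCoeff]
  | succ m ih =>
    rw [Finset.sum_range_succ, ← ih, pow_succ, mul_two, dirichlet_add, add_sub_cancel_left,
      mS, Finset.sum_range_add, Finset.mul_sum]
    congr 1
    refine Finset.sum_congr rfl fun i hi => ?_
    have hi := Finset.mem_range.1 hi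
    rw [dyadicBlockCoeff_eq (l := m) (by omega) (by rw [pow_succ]; omega)]

lemma abs_mS_le {c : ℕ → ℝ} (hc : ∀ j, |c j| ≤ 1) (n : ℕ) (x : G2) :
    |mS c n x| ≤ n := by
  calc |mS c n x| ≤ ∑ j ∈ Finset.range n, |c j * walsh j x| := Finset.abs_sum_le_sum_abs _ _
    _ ≤ ∑ j ∈ Finset.range n, (1 : ℝ) :=
        Finset.sum_le_sum fun j _ => by rw [abs_mul, abs_walsh, mul_one]; exact hc j
    _ = n := by simp

lemma two_pow_succ_rpow_mul_inv_two_pow (p : ℝ) (N : ℕ) :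
    ((2 : ℝ≥0∞) ^ (N + 1)) ^ p * (2 ^ N)⁻¹ = 2 ^ p * (2 ^ (p - 1)) ^ N := by
  rw [← ENNReal.rpow_natCast, ← ENNReal.rpow_mul, ← ENNReal.rpow_natCast (2 ^ (p - 1)),
    ← ENNReal.rpow_mul, ← ENNReal.rpow_natCast, ← ENNReal.rpow_neg,
    ← ENNReal.rpow_add _ _ two_ne_zero ofNat_ne_top,
    ← ENNReal.rpow_add _ _ two_ne_zero ofNat_ne_top]
  congr 1
  push_cast
  ring

section DyadicBlockCoeff

variable {b : ℕ → ℝ} {x : G2}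

lemma mS_dyadicBlockCoeff_two_pow_eq_zero {L : ℕ} (hb : ∀ l < L, b l = 0) (hx : x ∉ cyl L)
    (m : ℕ) : mS (dyadicBlockCoeff b) (2 ^ m) x = 0 := by
  rw [mS_dyadicBlockCoeff_two_pow]
  refine Finset.sum_eq_zero fun l _ => ?_
  rcases lt_or_ge l L with hl | hl
  · rw [hb l hl, zero_mul]
  · rw [dirichlet_two_pow_succ_sub_of_not_mem fun h => hx (cyl_antitone hl h), mul_zero]

lemma mS_dyadicBlockCoeff_two_pow_of_le {M m : ℕ} (hx : x ∉ cyl M) (hMm : M ≤ m) :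
    mS (dyadicBlockCoeff b) (2 ^ m) x = mS (dyadicBlockCoeff b) (2 ^ M) x := by
  rw [mS_dyadicBlockCoeff_two_pow, mS_dyadicBlockCoeff_two_pow,
    ← Finset.sum_range_add_sum_Ico _ hMm, add_eq_left]
  refine Finset.sum_eq_zero fun l hl => ?_
  rw [dirichlet_two_pow_succ_sub_of_not_mem
    fun h => hx (cyl_antitone (Finset.mem_Ico.1 hl).1 h), mul_zero]

lemma abs_mS_dyadicBlockCoeff_two_pow_le (hb : ∀ l, |b l| ≤ 1) {M : ℕ} (hx : x ∉ cyl M)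
    (m : ℕ) : |mS (dyadicBlockCoeff b) (2 ^ m) x| ≤ 2 ^ M := by
  have hc : ∀ j, |dyadicBlockCoeff b j| ≤ 1 := fun j => by
    unfold dyadicBlockCoeff; split_ifs <;> simp [hb]
  rcases le_total m M with hmM | hMm
  · exact (abs_mS_le hc _ x).trans (by exact_mod_cast Nat.pow_le_pow_right two_pos hmM)
  · rw [mS_dyadicBlockCoeff_two_pow_of_le hx hMm]
    exact_mod_cast abs_mS_le hc _ x

lemma mMax_dyadicBlockCoeff_eq_zero {L : ℕ} (hb : ∀ l < L, b l = 0) (hx : x ∉ cyl L) :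
    mMax (dyadicBlockCoeff b) x = 0 := by
  simp [mMax, mS_dyadicBlockCoeff_two_pow_eq_zero hb hx]

lemma mMax_dyadicBlockCoeff_le (hb : ∀ l, |b l| ≤ 1) {M : ℕ} (hx : x ∉ cyl M) :
    mMax (dyadicBlockCoeff b) x ≤ 2 ^ M := by
  refine iSup_le fun m => ?_
  rw [← enorm_eq_nnnorm, ← ofReal_norm, Real.norm_eq_abs, ← ENNReal.ofReal_ofNat 2,
    ← ENNReal.ofReal_pow zero_le_two]
  exact ENNReal.ofReal_le_ofReal (abs_mS_dyadicBlockCoeff_two_pow_le hb hx m)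

lemma lintegral_mMax_dyadicBlockCoeff_rpow_le (hb : ∀ l, |b l| ≤ 1) {L : ℕ}
    (hbL : ∀ l < L, b l = 0) {p : ℝ} (hp : 0 < p) :
    ∫⁻ x, mMax (dyadicBlockCoeff b) x ^ p ∂muG ≤
      2 ^ p * (2 ^ (p - 1)) ^ L * (1 - 2 ^ (p - 1))⁻¹ := by
  calc ∫⁻ x, mMax (dyadicBlockCoeff b) x ^ p ∂muG
      ≤ ∑' j, ((2 : ℝ≥0∞) ^ (L + j + 1)) ^ p * (2 ^ (L + j))⁻¹ :=
        lintegral_le_tsum_of_le_on_shells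
          (fun x hx => by rw [mMax_dyadicBlockCoeff_eq_zero hbL hx, ENNReal.zero_rpow_of_pos hp])
          (fun j x _ hx => ENNReal.rpow_le_rpow (mMax_dyadicBlockCoeff_le hb hx) hp.le)
    _ = ∑' j, 2 ^ p * (2 ^ (p - 1)) ^ L * (2 ^ (p - 1)) ^ j := by
        simp_rw [two_pow_succ_rpow_mul_inv_two_pow, pow_add, mul_assoc]
    _ = 2 ^ p * (2 ^ (p - 1)) ^ L * (1 - 2 ^ (p - 1))⁻¹ := by
        rw [ENNReal.tsum_mul_left, ENNReal.tsum_geometric]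

lemma mHp_dyadicBlockCoeff_le (hb : ∀ l, |b l| ≤ 1) {L : ℕ} (hbL : ∀ l < L, b l = 0)
    {p : ℝ} (hp : 0 < p) :
    mHp p (dyadicBlockCoeff b) ≤
      2 * ((1 - 2 ^ (p - 1))⁻¹) ^ (1 / p) * 2 ^ (-(L : ℝ) * (1 / p - 1)) := by
  have hp' : 0 ≤ 1 / p := by positivity
  refine (ENNReal.rpow_le_rpow (lintegral_mMax_dyadicBlockCoeff_rpow_le hb hbL hp)
    hp').trans_eq ?_
  rw [ENNReal.mul_rpow_of_nonneg _ _ hp', ENNReal.mul_rpow_of_nonneg _ _ hp',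
    ← ENNReal.rpow_natCast, ← ENNReal.rpow_mul, ← ENNReal.rpow_mul, ← ENNReal.rpow_mul,
    mul_one_div_cancel hp.ne', ENNReal.rpow_one, mul_right_comm]
  congr 2
  field_simp
  ring

end DyadicBlockCoeff

lemma dyadicBlockCoeff_ite_lt (b : ℕ → ℝ) (L : ℕ) :
    (fun j => if j < 2 ^ L then 0 else dyadicBlockCoeff b j) =
      dyadicBlockCoeff (fun l => if l < L then 0 else b l) := by
  funext j
  rcases eq_or_ne j 0 with rfl | hj
  · simp [dyadicBlockCoeff]
  · simp only [dyadicBlockCoeff, if_neg hj, Nat.log_lt_iff_lt_pow one_lt_two hj]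

lemma cc16_eq_dyadicBlockCoeff : cc16 = dyadicBlockCoeff ({l | Even l}.indicator 1) := by
  funext j
  rcases eq_or_ne j 0 with rfl | hj
  · simp [cc16, dyadicBlockCoeff]
  · have hlog : ∀ i, 2 ^ (2 * i) ≤ j ∧ j < 2 ^ (2 * i + 1) ↔ Nat.log 2 j = 2 * i :=
      fun i => (Nat.log_eq_iff (.inr ⟨one_lt_two, hj⟩)).symm
    simp only [cc16, dyadicBlockCoeff, if_neg hj, hlog, Set.indicator_apply, Set.mem_ofPred_eq,
      even_iff_exists_two_mul, Pi.one_apply]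

lemma abs_indicator_one_le (s : Set ℕ) (l : ℕ) : |s.indicator (1 : ℕ → ℝ) l| ≤ 1 := by
  by_cases l ∈ s <;> simp [*]

lemma mHp_cc16_le {p : ℝ} (hp : 0 < p) :
    mHp p cc16 ≤ 2 * ((1 - 2 ^ (p - 1))⁻¹) ^ (1 / p) := by
  rw [cc16_eq_dyadicBlockCoeff]
  refine (mHp_dyadicBlockCoeff_le (L := 0) (abs_indicator_one_le _) (by simp) hp).trans_eq ?_
  rw [Nat.cast_zero, neg_zero, zero_mul, ENNReal.rpow_zero, mul_one]

lemma mHp_tail_cc16_le {p : ℝ} (hp : 0 < p) (n : ℕ) :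
    mHp p (fun j => if j < 2 ^ (2 * n) then 0 else cc16 j) ≤
      2 * ((1 - 2 ^ (p - 1))⁻¹) ^ (1 / p) * 2 ^ (-(2 * n : ℝ) * (1 / p - 1)) := by
  rw [cc16_eq_dyadicBlockCoeff, dyadicBlockCoeff_ite_lt]
  have hb : ∀ l, |if l < 2 * n then 0 else {l | Even l}.indicator (1 : ℕ → ℝ) l| ≤ 1 :=
    fun l => by split_ifs <;> simp [abs_indicator_one_le]
  exact_mod_cast mHp_dyadicBlockCoeff_le hb (fun l hl => if_pos hl) hp

lemma mS_cc16_two_pow_two_mul_add_one (K : ℕ) (x : G2) :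
    mS cc16 (2 ^ (2 * K + 1)) x =
      ∑ i ∈ Finset.range (K + 1),
        (dirichlet (2 ^ (2 * i + 1)) x - dirichlet (2 ^ (2 * i)) x) := by
  rw [cc16_eq_dyadicBlockCoeff, mS_dyadicBlockCoeff_two_pow]
  induction K with
  | zero => simp
  | succ K ih =>
    rw [show 2 * (K + 1) + 1 = 2 * K + 1 + 1 + 1 by ring, Finset.sum_range_succ,
      Finset.sum_range_succ, ih, Finset.sum_range_succ _ (K + 1)]
    have hodd : ¬ Even (2 * K + 1) := by simp [parity_simps]
    have heven : Even (2 * K + 1 + 1) := ⟨K + 1, by ring⟩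
    simp [hodd, heven, mul_add, add_assoc]

lemma F16_eq_mS_cc16 {k : ℕ} {x : G2} (hx : x ∉ cyl (2 * k + 2)) :
    F16 x = mS cc16 (2 ^ (2 * k + 1)) x := by
  rw [F16, mS_cc16_two_pow_two_mul_add_one, tsum_eq_sum fun i hi => ?_]
  refine dirichlet_two_pow_succ_sub_of_not_mem fun h => hx (cyl_antitone ?_ h)
  simp only [Finset.mem_range, not_lt] at hi
  omega

lemma F16_sub_mS_cc16_eq_walsh {k : ℕ} {x : G2} (hx : x ∉ cyl (2 * k + 2)) :
    F16 x - mS cc16 (2 ^ (2 * k + 1) - 1) x = walsh (2 ^ (2 * k + 1) - 1) x := by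
  set N := 2 ^ (2 * k + 1) - 1 with hN
  have hN1 : 2 ^ (2 * k + 1) = N + 1 := (Nat.sub_add_cancel Nat.one_le_two_pow).symm
  have hcN : cc16 N = 1 := by
    have := pow_succ 2 (2 * k)
    have := Nat.one_le_two_pow (n := 2 * k)
    exact if_pos ⟨k, by omega, by omega⟩
  rw [F16_eq_mS_cc16 hx, hN1, mS, Finset.sum_range_succ, ← mS, hcN, one_mul, add_sub_cancel_left]

lemma le_weakLp {p : ℝ} (hp : 0 ≤ p) (f : G2 → ℝ) (t : NNReal) {s : Set G2}
    (hs : ∀ x ∈ s, (t : ℝ) < |f x|) : (t : ℝ≥0∞) * muG s ^ (1 / p) ≤ weakLp p f := by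
  refine le_trans ?_
    (le_iSup (fun t : NNReal => (t : ℝ≥0∞) * muG {x | (t : ℝ) < |f x|} ^ (1 / p)) t)
  gcongr
  exact hs

lemma inv_two_mul_le_weakLp_F16_sub_mS_cc16 {p : ℝ} (hp : 0 ≤ p) (k : ℕ) :
    2⁻¹ * 2⁻¹ ^ (1 / p) ≤ weakLp p (fun x => F16 x - mS cc16 (2 ^ (2 * k + 1) - 1) x) := by
  have hmeas : muG (cyl 1)ᶜ = 2⁻¹ := by
    rw [prob_compl_eq_one_sub (measurableSet_cyl 1), muG_cyl, pow_one, ENNReal.one_sub_inv_two]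
  calc (2⁻¹ : ℝ≥0∞) * 2⁻¹ ^ (1 / p)
        = ((2⁻¹ : NNReal) : ℝ≥0∞) * muG (cyl 1)ᶜ ^ (1 / p) := by rw [hmeas]; simp
    _ ≤ _ := le_weakLp hp _ _ fun x hx => by
        have hx' : x ∉ cyl (2 * k + 2) := fun h => hx (cyl_antitone (by omega) h)
        rw [F16_sub_mS_cc16_eq_walsh hx', abs_walsh]
        norm_num

theorem stmt16 (p : ℝ) (hp : 0 < p) (hp1 : p < 1) :
    mHp p cc16 < ⊤ ∧
    (∃ C : ℝ, 0 < C ∧ ∀ n : ℕ,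
      mHp p (fun j => if j < 2 ^ (2 * n) then 0 else cc16 j) ≤
        ENNReal.ofReal (C * (2 : ℝ) ^ (-(2 * n : ℝ) * (1 / p - 1)))) ∧
    0 < Filter.atTop.limsup
        (fun k : ℕ => weakLp p (fun x => F16 x - mS cc16 (2 ^ (2 * k + 1) - 1) x)) ∧
    ¬ Tendsto (fun k : ℕ => weakLp p (fun x => F16 x - mS cc16 (2 ^ (2 * k + 1) - 1) x))
        atTop (nhds 0) := by
  set Q : ℝ≥0∞ := 2 * ((1 - 2 ^ (p - 1))⁻¹) ^ (1 / p)
  have hr : (1 - (2 : ℝ≥0∞) ^ (p - 1))⁻¹ ≠ ⊤ := ENNReal.inv_ne_top.2 (tsub_pos_of_lt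
    (ENNReal.rpow_lt_one_of_one_lt_of_neg one_lt_two (by linarith))).ne'
  have hQ0 : Q ≠ 0 := mul_ne_zero two_ne_zero (ENNReal.rpow_pos
    (ENNReal.inv_pos.2 (ne_top_of_le_ne_top one_ne_top tsub_le_self)) hr).ne'
  have hQ : Q ≠ ⊤ := mul_ne_top ofNat_ne_top (ENNReal.rpow_ne_top_of_nonneg (by positivity) hr)
  have hlimsup : 0 < atTop.limsup
      (fun k : ℕ => weakLp p (fun x => F16 x - mS cc16 (2 ^ (2 * k + 1) - 1) x)) :=
    (ENNReal.mul_pos (by simp) (ENNReal.rpow_pos (by simp) (by simp)).ne').trans_le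
      (le_limsup_of_frequently_le (.of_forall (inv_two_mul_le_weakLp_F16_sub_mS_cc16 hp.le)))
  refine ⟨(mHp_cc16_le hp).trans_lt hQ.lt_top,
    ⟨Q.toReal, ENNReal.toReal_pos hQ0 hQ, fun n => ?_⟩, hlimsup, fun h => hlimsup.ne' h.limsup_eq⟩
  rw [ENNReal.ofReal_mul toReal_nonneg, ofReal_toReal hQ, ← ENNReal.ofReal_rpow_of_pos two_pos,
    ofReal_ofNat]
  exact mHp_tail_cc16_le hp n

end
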